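/- For every integer n ≥ 31: if n is odd, then for each m ∈ {(n+1)/2, (n+3)/2, (n+5)/2}, and if n is even, then for each m ∈ {(n−2)/2, n/2, (n+2)/2}, there exists a partition p of n with λ(p) = m, largest part of p at most (n + 2)/2, and number of parts of p at most (n + 2)/2. -/

import Mathlib

/-- `λ(p) = (1/2)·Σ_{j=1}^k n_j·(n_j − 2j + 1)` for a finite sequence of naturals. -/
def transLam (L : List ℕ) : ℚ :=
  (∑ j ∈ Finset.range L.length,
    (L.getD j 0 : ℚ) * ((L.getD j 0 : ℚ) - 2 * ((j : ℚ) + 1) + 1)) / 2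

/-- A partition of `n`: a nonincreasing list of positive integers summing to `n`. -/
def IsPartitionOf (n : ℕ) (L : List ℕ) : Prop :=
  L.Pairwise (· ≥ ·) ∧ (∀ x ∈ L, 0 < x) ∧ L.sum = n

/-!
Each partition is a small fixed core `T` under a first row of length `c + |T| + 2`, followed by
`c` rows of length one. Raising `c` by one adds `2` to `n` and exactly `1` to `λ`: lengthening the
first row adds `c + |T| + 2`, the new row of length one at position `c + |T| + 2` subtracts
`c + |T| + 1`. So one core per case covers all large `n`.
-/

lemma sum_range_getD (L : List ℕ) :
    ∑ j ∈ Finset.range L.length, (L.getD j 0 : ℚ) = L.sum := by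
  induction L with
  | nil => simp
  | cons x T ih =>
    rw [List.length_cons, Finset.sum_range_succ']
    simp only [List.getD_cons_succ, List.getD_cons_zero, List.sum_cons, ih]
    push_cast
    ring

lemma transLam_append (L M : List ℕ) :
    transLam (L ++ M) = transLam L + transLam M - L.length * M.sum := by
  have shift : ∀ j ∈ Finset.range M.length,
      ((L ++ M).getD (L.length + j) 0 : ℚ) * (((L ++ M).getD (L.length + j) 0 : ℚ)
        - 2 * (((L.length + j : ℕ) : ℚ) + 1) + 1)
      = (M.getD j 0 : ℚ) * ((M.getD j 0 : ℚ) - 2 * ((j : ℚ) + 1) + 1)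
        - 2 * L.length * (M.getD j 0 : ℚ) := by
    intro j _
    rw [List.getD_append_right _ _ _ _ (by omega), Nat.add_sub_cancel_left]
    push_cast
    ring
  have head : ∀ j ∈ Finset.range L.length,
      ((L ++ M).getD j 0 : ℚ) * (((L ++ M).getD j 0 : ℚ) - 2 * ((j : ℚ) + 1) + 1)
      = (L.getD j 0 : ℚ) * ((L.getD j 0 : ℚ) - 2 * ((j : ℚ) + 1) + 1) := by
    intro j hj
    rw [List.getD_append _ _ _ _ (Finset.mem_range.mp hj)]
  unfold transLam
  rw [List.length_append, Finset.sum_range_add, Finset.sum_congr rfl head,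
    Finset.sum_congr rfl shift, Finset.sum_sub_distrib, ← Finset.mul_sum, sum_range_getD]
  ring

lemma transLam_singleton (x : ℕ) : transLam [x] = x * (x - 1 : ℚ) / 2 := by
  simp only [transLam, List.length_singleton, Finset.sum_range_one, List.getD_cons_zero]
  push_cast
  ring

lemma transLam_cons (x : ℕ) (T : List ℕ) :
    transLam (x :: T) = x * (x - 1 : ℚ) / 2 + transLam T - T.sum := by
  rw [← List.singleton_append, transLam_append, transLam_singleton]
  simp only [List.length_cons, List.length_nil, zero_add, Nat.cast_one, Nat.cast_list_sum, one_mul]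

lemma transLam_replicate_one (c : ℕ) :
    transLam (List.replicate c 1) = -(c * (c - 1 : ℚ)) / 2 := by
  induction c with
  | zero => simp [transLam]
  | succ c ih =>
    rw [List.replicate_succ', transLam_append, ih, transLam_singleton]
    simp only [Nat.cast_one, sub_self, mul_zero, zero_div, add_zero, List.length_replicate,
      List.sum_cons, List.sum_nil, mul_one, Nat.cast_add, add_sub_cancel_right]
    ring

def hookPad (T : List ℕ) (c : ℕ) : List ℕ :=
  (c + T.length + 2) :: (T ++ List.replicate c 1)

lemma sum_hookPad (T : List ℕ) (c : ℕ) :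
    (hookPad T c).sum = 2 * c + T.length + 2 + T.sum := by
  simp only [hookPad, List.sum_cons, List.sum_append, List.sum_replicate, smul_eq_mul, mul_one]
  ring

lemma transLam_hookPad (T : List ℕ) (c : ℕ) :
    transLam (hookPad T c) =
      c + ((T.length + 2) * (T.length + 1) / 2 + transLam T - T.sum) := by
  rw [hookPad, transLam_cons, transLam_append, transLam_replicate_one]
  simp only [Nat.cast_add, Nat.cast_ofNat, List.sum_replicate, smul_eq_mul, mul_one,
    List.sum_append, Nat.cast_list_sum]
  ring

lemma isPartitionOf_hookPad {T : List ℕ} (hT : T.Pairwise (· ≥ ·)) (hpos : ∀ x ∈ T, 0 < x)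
    {c : ℕ} (hc : ∀ x ∈ T, x ≤ c + T.length + 2) :
    IsPartitionOf (2 * c + T.length + 2 + T.sum) (hookPad T c) := by
  refine ⟨?_, ?_, sum_hookPad T c⟩
  · simp only [hookPad, List.pairwise_cons, List.pairwise_append, List.pairwise_replicate,
      List.mem_append, List.mem_replicate]
    refine ⟨fun b hb => ?_, hT, by simp, fun a ha b hb => ?_⟩
    · rcases hb with hb | ⟨-, rfl⟩
      · exact hc b hb
      · omega
    · rw [hb.2]
      exact hpos a ha
  · simp only [hookPad, List.mem_cons, List.mem_append, List.mem_replicate]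
    rintro x (rfl | hx | ⟨-, rfl⟩)
    · omega
    · exact hpos x hx
    · exact Nat.one_pos

theorem exists_partition_of_core (T : List ℕ) (k : ℕ) (hT : T.Pairwise (· ≥ ·))
    (hpos : ∀ x ∈ T, 0 < x)
    (hk : ((T.length + 2) * (T.length + 1) / 2 + transLam T - T.sum : ℚ) = k)
    {n m : ℕ} (c : ℕ) (hc : ∀ x ∈ T, x ≤ c + T.length + 2)
    (hn : n = 2 * c + T.length + 2 + T.sum) (hm : m = c + k) :
    ∃ L : List ℕ, IsPartitionOf n L ∧ transLam L = (m : ℚ) ∧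
      (∀ x ∈ L, 2 * x ≤ n + 2) ∧ 2 * L.length ≤ n + 2 := by
  subst hn hm
  have hlen := List.length_le_sum_of_one_le T hpos
  refine ⟨hookPad T c, isPartitionOf_hookPad hT hpos hc, ?_, ?_, ?_⟩
  · rw [transLam_hookPad, hk]
    push_cast
    ring
  · simp only [hookPad, List.mem_cons, List.mem_append, List.mem_replicate]
    rintro x (rfl | hx | ⟨-, rfl⟩)
    · omega
    · have := hc x hx
      omega
    · omega
  · simp only [hookPad, List.length_cons, List.length_append, List.length_replicate]
    omega

theorem set_A1_with_bounds (n : ℕ) (hn : 31 ≤ n) (m : ℕ)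
    (h : (Odd n ∧ (2 * m = n + 1 ∨ 2 * m = n + 3 ∨ 2 * m = n + 5)) ∨
         (Even n ∧ (2 * m = n - 2 ∨ 2 * m = n ∨ 2 * m = n + 2))) :
    ∃ L : List ℕ, IsPartitionOf n L ∧ transLam L = (m : ℚ) ∧
      (∀ x ∈ L, 2 * x ≤ n + 2) ∧ 2 * L.length ≤ n + 2 := by
  rcases h with ⟨-, h | h | h⟩ | ⟨-, h | h | h⟩
  · exact exists_partition_of_core [7, 4, 3, 3] 12 (by decide) (by decide)
      (by norm_num [transLam, Finset.sum_range_succ]) ((n - 23) / 2) (by simp; omega)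
      (by simp; omega) (by omega)
  · exact exists_partition_of_core [4] 5 (by decide) (by decide)
      (by norm_num [transLam]) ((n - 7) / 2) (by simp; omega)
      (by simp; omega) (by omega)
  · exact exists_partition_of_core [5, 2] 8 (by decide) (by decide)
      (by norm_num [transLam, Finset.sum_range_succ]) ((n - 11) / 2) (by simp; omega)
      (by simp; omega) (by omega)
  · exact exists_partition_of_core [8, 5, 4, 3, 3] 14 (by decide) (by decide)
      (by norm_num [transLam, Finset.sum_range_succ]) ((n - 30) / 2) (by simp; omega)
      (by simp; omega) (by omega)
  · exact exists_partition_of_core [] 1 (by decide) (by decide)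
      (by norm_num [transLam]) ((n - 2) / 2) (by simp)
      (by simp; omega) (by omega)
  · exact exists_partition_of_core [8, 3, 3, 3, 2] 14 (by decide) (by decide)
      (by norm_num [transLam, Finset.sum_range_succ]) ((n - 26) / 2) (by simp; omega)
      (by simp; omega) (by omega)
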